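/- arXiv:0910.4991 — 2 statements merged into one kernel-verified Lean document; each statement's English description precedes it below -/
import Mathlib

section
/- Let α ≥ 0, β ∈ (0,1], and λ ≥ e^{(3+2α)/β}. Define φ : (0,∞) → ℝ by φ(r) = r^β / (log(λ+r))^α. Then φ''(r) ≤ 0 for all r > 0. -/
/-!
Write `φ = exp ∘ g` with `g(r) = β log r - α log (log (λ + r))`, so that `φ'' = (g'' + g'²) φ`.
With `L = log (λ + r)` and `t = r / (λ + r) ∈ [0, 1]`, the factor `r² L² (g'' + g'²)` is a quadratic
in `t` with nonnegative leading coefficient, hence at most its larger value at `t = 0` or `t = 1`;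
both are nonpositive as soon as `β L ≥ 1 + α`, which the lower bound on `λ` guarantees.
-/

open Real Filter Topology

theorem deriv_deriv_eq_of_eventuallyEq_exp {f g g' : ℝ → ℝ} {g'' x : ℝ}
    (hf : f =ᶠ[𝓝 x] fun y => exp (g y)) (hg : ∀ᶠ y in 𝓝 x, HasDerivAt g (g' y) y)
    (hg' : HasDerivAt g' g'' x) :
    deriv (deriv f) x = (g'' + g' x ^ 2) * exp (g x) := by
  have hf' : deriv f =ᶠ[𝓝 x] fun y => exp (g y) * g' y := by
    filter_upwards [hf.deriv, hg] with y hfy hgy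
    rw [hfy, hgy.exp.deriv]
  rw [hf'.deriv_eq]
  exact (hg.self_of_nhds.exp.mul hg').deriv.trans (by ring)

theorem rpow_div_rpow_eq_exp {x y : ℝ} (hx : 0 < x) (hy : 0 < y) (a b : ℝ) :
    x ^ a / y ^ b = exp (a * log x - b * log y) := by
  rw [rpow_def_of_pos hx, rpow_def_of_pos hy, exp_sub, mul_comm a, mul_comm b]

section

variable {α β : ℝ}

theorem quadratic_nonpos_of_one_add_le_mul {L t : ℝ} (hα : 0 ≤ α) (hβ0 : 0 ≤ β) (hβ1 : β ≤ 1)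
    (hL : 1 + α ≤ β * L) (ht0 : 0 ≤ t) (ht1 : t ≤ 1) :
    -β * L ^ 2 + α * (L + 1) * t ^ 2 + (β * L - α * t) ^ 2 ≤ 0 := by
  have hL0 : 0 ≤ L := by nlinarith
  have hβL : β * L ≤ L := by nlinarith
  have hQ0 : -β * L ^ 2 + (β * L) ^ 2 ≤ 0 := by nlinarith [mul_nonneg hβ0 hL0]
  -- with `u = β L`, the value at `t = 1` is `(u - α)² + α - L (u - α) ≤ α (1 + α - u)`
  have hQ1 : -β * L ^ 2 + α * (L + 1) + (β * L - α) ^ 2 ≤ 0 := by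
    nlinarith [mul_nonneg (sub_nonneg.2 hβL) (by linarith : 0 ≤ β * L - α),
      mul_nonneg hα (by linarith : 0 ≤ β * L - 1 - α)]
  -- the quadratic lies below its chord on `[0, 1]`
  nlinarith [mul_nonneg (mul_nonneg hα (by linarith : 0 ≤ L + 1)) (mul_nonneg ht0 (sub_nonneg.2 ht1)),
    mul_nonneg (sub_nonneg.2 ht1) (neg_nonneg.2 hQ0), mul_nonneg ht0 (neg_nonneg.2 hQ1)]

theorem second_log_deriv_add_sq_nonpos {r A L : ℝ} (hα : 0 ≤ α) (hβ0 : 0 ≤ β) (hβ1 : β ≤ 1)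
    (hr : 0 < r) (hrA : r ≤ A) (hL : 1 + α ≤ β * L) :
    -β / r ^ 2 + α * (L + 1) / (A * L) ^ 2 + (β / r - α / (A * L)) ^ 2 ≤ 0 := by
  have hA : 0 < A := hr.trans_le hrA
  have hL0 : 0 < L := by nlinarith
  have hQ := quadratic_nonpos_of_one_add_le_mul hα hβ0 hβ1 hL (div_nonneg hr.le hA.le)
    ((div_le_one hA).2 hrA)
  have hform : -β / r ^ 2 + α * (L + 1) / (A * L) ^ 2 + (β / r - α / (A * L)) ^ 2
      = (-β * L ^ 2 + α * (L + 1) * (r / A) ^ 2 + (β * L - α * (r / A)) ^ 2) / (r * L) ^ 2 := by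
    field_simp
  rw [hform]
  exact div_nonpos_of_nonpos_of_nonneg hQ (sq_nonneg _)

variable {lam s : ℝ}

theorem hasDerivAt_log_sub_log_log (hs : 0 < s) (hlam : 1 < lam + s) :
    HasDerivAt (fun s => β * log s - α * log (log (lam + s)))
      (β / s - α / ((lam + s) * log (lam + s))) s := by
  have hA : HasDerivAt (fun s => lam + s) 1 s := (hasDerivAt_id s).const_add lam
  have hlog := (hA.log (by linarith)).log (log_pos hlam).ne'
  refine (((hasDerivAt_log hs.ne').const_mul β).fun_sub (hlog.const_mul α)).congr_deriv ?_
  field_simp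

theorem hasDerivAt_div_sub_div_mul_log (hs : 0 < s) (hlam : 1 < lam + s) :
    HasDerivAt (fun s => β / s - α / ((lam + s) * log (lam + s)))
      (-β / s ^ 2 + α * (log (lam + s) + 1) / ((lam + s) * log (lam + s)) ^ 2) s := by
  have hA : HasDerivAt (fun s => lam + s) 1 s := (hasDerivAt_id s).const_add lam
  have hAL := hA.fun_mul (hA.log (by linarith))
  have hAL0 : (lam + s) * log (lam + s) ≠ 0 := (mul_pos (by linarith) (log_pos hlam)).ne'
  refine (((hasDerivAt_inv hs.ne').const_mul β).fun_sub
    ((hAL.fun_inv hAL0).const_mul α)).congr_deriv ?_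
  field_simp
  ring

end

/-- For `α ≥ 0`, `β ∈ (0,1]`, `λ ≥ e^{(3+2α)/β}`, the function
`φ(r) = r^β / (log(λ+r))^α` has nonpositive second derivative on `(0,∞)`. -/
theorem stmt6 (α β lam : ℝ) (hα : 0 ≤ α) (hβ0 : 0 < β) (hβ1 : β ≤ 1)
    (hlam : Real.exp ((3 + 2 * α) / β) ≤ lam) :
    ∀ r > (0 : ℝ),
      deriv (deriv (fun r : ℝ => r ^ β / (Real.log (lam + r)) ^ α)) r ≤ 0 := by
  intro r hr
  have hc : 0 < (3 + 2 * α) / β := div_pos (by linarith) hβ0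
  have hlam1 : 1 < lam := (one_lt_exp_iff.2 hc).trans_le hlam
  have hφ : (fun s : ℝ => s ^ β / log (lam + s) ^ α)
      =ᶠ[𝓝 r] fun s => exp (β * log s - α * log (log (lam + s))) := by
    filter_upwards [Ioi_mem_nhds hr] with s hs
    exact rpow_div_rpow_eq_exp hs (log_pos (by linarith [hs.out])) β α
  have hg : ∀ᶠ s in 𝓝 r, HasDerivAt (fun s => β * log s - α * log (log (lam + s)))
      (β / s - α / ((lam + s) * log (lam + s))) s := by
    filter_upwards [Ioi_mem_nhds hr] with s hs
    exact hasDerivAt_log_sub_log_log hs (by linarith [hs.out])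
  rw [deriv_deriv_eq_of_eventuallyEq_exp hφ hg
    (hasDerivAt_div_sub_div_mul_log (α := α) (β := β) hr (by linarith))]
  have hβL : 3 + 2 * α ≤ β * log (lam + r) := by
    rw [← div_le_iff₀' hβ0, ← log_exp ((3 + 2 * α) / β)]
    exact log_le_log (exp_pos _) (by linarith)
  exact mul_nonpos_of_nonpos_of_nonneg (second_log_deriv_add_sq_nonpos hα hβ0.le hβ1 hr
    (by linarith) (by linarith)) (exp_pos _).le
end

section
/- Let α ≥ 0, β ∈ (0,1], and λ ≥ e^{(3+2α)/β}. Define φ : (0,∞) → ℝ by φ(r) = r^β / (log(λ+r))^α. Then the third derivative φ'''(r) ≥ 0 for all r > 0. -/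
/-!
Write `u = λ + r` and `L = log u`. Differentiating `r ^ p * L ^ q * u ^ m` gives three terms of the
same shape, so `φ''' = r ^ (β - 3) * L ^ (-α - 3) * u ^ (-3) * N(r, L, u)` with `N` an explicit
polynomial. The four terms of `N` containing `u` are nonnegative, so `r ≤ u` gives
`N ≥ r ^ 3 * P(L)` for a cubic `P`, and `P(L) ≥ 0` as soon as `β L ≥ 3 + 2α`, which is exactly
the lower bound on `λ`.
-/

open Real Filter Topology

theorem deriv_deriv_deriv_eq_of_hasDerivAt {𝕜 F : Type*} [NontriviallyNormedField 𝕜]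
    [NormedAddCommGroup F] [NormedSpace 𝕜 F] {f f₁ f₂ : 𝕜 → F} {x : 𝕜} {c : F}
    (hf : ∀ᶠ y in 𝓝 x, HasDerivAt f (f₁ y) y) (hf₁ : ∀ᶠ y in 𝓝 x, HasDerivAt f₁ (f₂ y) y)
    (hf₂ : HasDerivAt f₂ c x) : deriv (deriv (deriv f)) x = c := by
  have h₁ : deriv f =ᶠ[𝓝 x] f₁ := hf.mono fun y hy => hy.deriv
  have h₂ : deriv f₁ =ᶠ[𝓝 x] f₂ := hf₁.mono fun y hy => hy.deriv
  rw [(h₁.deriv.trans h₂).deriv_eq, hf₂.deriv]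

noncomputable def logMonomial (c p q m x : ℝ) : ℝ :=
  x ^ p * log (c + x) ^ q * (c + x) ^ m

theorem logMonomial_pos {c x : ℝ} (p q m : ℝ) (hx : 0 < x) (hcx : 1 < c + x) :
    0 < logMonomial c p q m x := by
  have := log_pos hcx
  unfold logMonomial
  positivity

theorem hasDerivAt_logMonomial {c x : ℝ} (p q m : ℝ) (hx : 0 < x) (hcx : 1 < c + x) :
    HasDerivAt (logMonomial c p q m)
      (p * logMonomial c (p - 1) q m x + q * logMonomial c p (q - 1) (m - 1) x
        + m * logMonomial c p q (m - 1) x) x := by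
  have hu : 0 < c + x := by linarith
  have hshift : HasDerivAt (fun y => c + y) 1 x := (hasDerivAt_id x).const_add c
  have hprod := ((hasDerivAt_id x).rpow_const (p := p) (Or.inl hx.ne')).mul
    (((hshift.log hu.ne').rpow_const (p := q) (Or.inl (log_pos hcx).ne')).mul
    (hshift.rpow_const (p := m) (Or.inl hu.ne')))
  refine (hprod.congr_deriv ?_).congr_of_eventuallyEq (.of_forall fun y => ?_)
  · simp only [logMonomial, id, Pi.mul_apply, rpow_sub_one hu.ne']
    field_simp
    ring
  · simp only [logMonomial, id, Pi.mul_apply, mul_assoc]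

noncomputable def phi (lam α β x : ℝ) : ℝ := x ^ β / log (lam + x) ^ α

noncomputable def phiDeriv₁ (lam α β x : ℝ) : ℝ :=
  β * logMonomial lam (β - 1) (-α) 0 x - α * logMonomial lam β (-α - 1) (-1) x

noncomputable def phiDeriv₂ (lam α β x : ℝ) : ℝ :=
  β * (β - 1) * logMonomial lam (β - 2) (-α) 0 x
    - 2 * α * β * logMonomial lam (β - 1) (-α - 1) (-1) x
    + α * (α + 1) * logMonomial lam β (-α - 2) (-2) x + α * logMonomial lam β (-α - 1) (-2) x

def phiDeriv₃Numerator (α β r L u : ℝ) : ℝ :=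
  β * (β - 1) * (β - 2) * L ^ 3 * u ^ 3 - 3 * α * β * (β - 1) * r * L ^ 2 * u ^ 2
    + 3 * α * β * (α + 1) * r ^ 2 * L * u + 3 * α * β * r ^ 2 * L ^ 2 * u
    - α * (α + 1) * (α + 2) * r ^ 3 - 3 * α * (α + 1) * r ^ 3 * L - 2 * α * r ^ 3 * L ^ 2

section

variable {lam x : ℝ} (α β : ℝ)

theorem hasDerivAt_phi (hlam : 1 ≤ lam) (hx : 0 < x) :
    HasDerivAt (phi lam α β) (phiDeriv₁ lam α β x) x := by
  have hphi : phi lam α β =ᶠ[𝓝 x] logMonomial lam β (-α) 0 := by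
    filter_upwards [eventually_gt_nhds hx] with y hy
    rw [phi, logMonomial, rpow_zero, mul_one, rpow_neg (log_nonneg (by linarith)),
      div_eq_mul_inv]
  refine ((hasDerivAt_logMonomial β (-α) 0 hx (by linarith)).congr_of_eventuallyEq
    hphi).congr_deriv ?_
  rw [phiDeriv₁]
  ring_nf

theorem hasDerivAt_phiDeriv₁ (hlam : 1 ≤ lam) (hx : 0 < x) :
    HasDerivAt (phiDeriv₁ lam α β) (phiDeriv₂ lam α β x) x := by
  have hlx : 1 < lam + x := by linarith
  refine (((hasDerivAt_logMonomial (β - 1) (-α) 0 hx hlx).const_mul β).sub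
    ((hasDerivAt_logMonomial β (-α - 1) (-1) hx hlx).const_mul α)).congr_deriv ?_
  rw [phiDeriv₂]
  ring_nf

theorem hasDerivAt_phiDeriv₂ (hlam : 1 ≤ lam) (hx : 0 < x) :
    HasDerivAt (phiDeriv₂ lam α β) (logMonomial lam (β - 3) (-α - 3) (-3) x *
      phiDeriv₃Numerator α β x (log (lam + x)) (lam + x)) x := by
  have hlx : 1 < lam + x := by linarith
  have hL : 0 < log (lam + x) := log_pos hlx
  have hu : 0 < lam + x := by linarith
  refine (((((hasDerivAt_logMonomial (β - 2) (-α) 0 hx hlx).const_mul (β * (β - 1))).sub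
    ((hasDerivAt_logMonomial (β - 1) (-α - 1) (-1) hx hlx).const_mul (2 * α * β))).add
    ((hasDerivAt_logMonomial β (-α - 2) (-2) hx hlx).const_mul (α * (α + 1)))).add
    ((hasDerivAt_logMonomial β (-α - 1) (-2) hx hlx).const_mul α)).congr_deriv ?_
  simp only [logMonomial, phiDeriv₃Numerator, rpow_sub hx, rpow_sub hL, rpow_sub hu,
    rpow_neg hu.le, rpow_zero, rpow_one, rpow_ofNat]
  field_simp
  ring

theorem deriv_deriv_deriv_phi (hlam : 1 ≤ lam) (hx : 0 < x) :
    deriv (deriv (deriv (phi lam α β))) x = logMonomial lam (β - 3) (-α - 3) (-3) x *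
      phiDeriv₃Numerator α β x (log (lam + x)) (lam + x) :=
  deriv_deriv_deriv_eq_of_hasDerivAt
    ((eventually_gt_nhds hx).mono fun _ hy => hasDerivAt_phi α β hlam hy)
    ((eventually_gt_nhds hx).mono fun _ hy => hasDerivAt_phiDeriv₁ α β hlam hy)
    (hasDerivAt_phiDeriv₂ α β hlam hx)

end

/- With `B = β (1 - β) (2 - β) L + α (6β - 3β² - 2)` the cubic is
`L² B - 3α(α+1)(1-β) L - α(α+1)(α+2)`; the bound `β L ≥ 3 + 2α` gives `B ≥ M`, then
`M L ≥ 3α(α+1)(1-β) + α L`, and finally `α L² ≥ α(α+1)(α+2)`. -/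
theorem cubic_nonneg {α β L : ℝ} (hα : 0 ≤ α) (hβ0 : 0 < β) (hβ1 : β ≤ 1)
    (hL : 3 + 2 * α ≤ β * L) :
    0 ≤ β * (1 - β) * (2 - β) * L ^ 3 + α * (6 * β - 3 * β ^ 2 - 2) * L ^ 2
      - 3 * α * (α + 1) * (1 - β) * L - α * (α + 1) * (α + 2) := by
  have hLβ : β * L ≤ L := by nlinarith
  have hLk : 3 + 2 * α ≤ L := hL.trans hLβ
  set M := 3 * (1 - β) * (2 - β) + α * (2 - β ^ 2)
  have hlead : M ≤ β * (1 - β) * (2 - β) * L + α * (6 * β - 3 * β ^ 2 - 2) := by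
    linarith [mul_le_mul_of_nonneg_left hL (by nlinarith : 0 ≤ (1 - β) * (2 - β))]
  have hmid : 3 * α * (α + 1) * (1 - β) + α * L ≤ M * L := by
    have hL1β : 3 * (α + 1) ≤ (1 + β) * L := by nlinarith
    linarith [mul_le_mul_of_nonneg_left hL1β (mul_nonneg hα (by linarith : (0:ℝ) ≤ 1 - β)),
      mul_nonneg (by nlinarith : 0 ≤ 3 * (1 - β) * (2 - β)) (by linarith : (0:ℝ) ≤ L)]
  have hlow : α * (α + 1) * (α + 2) ≤ α * L ^ 2 := by
    nlinarith [mul_le_mul_of_nonneg_left (pow_le_pow_left₀ (by linarith) hLk 2) hα]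
  linarith [mul_le_mul_of_nonneg_left hlead (sq_nonneg L),
    mul_le_mul_of_nonneg_left hmid (by linarith : (0:ℝ) ≤ L)]

theorem phiDeriv₃Numerator_nonneg {α β r L u : ℝ} (hα : 0 ≤ α) (hβ0 : 0 < β) (hβ1 : β ≤ 1)
    (hr : 0 ≤ r) (hru : r ≤ u) (hL : 3 + 2 * α ≤ β * L) :
    0 ≤ phiDeriv₃Numerator α β r L u := by
  have hL0 : 0 ≤ L := by nlinarith
  have hu1 : 0 ≤ u - r := by linarith
  have hu2 : 0 ≤ u ^ 2 - r ^ 2 := by nlinarith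
  have hu3 : 0 ≤ u ^ 3 - r ^ 3 := by nlinarith
  have hβ : 0 ≤ β * (1 - β) := mul_nonneg hβ0.le (by linarith)
  have hαβ : 0 ≤ α * β := mul_nonneg hα hβ0.le
  rw [phiDeriv₃Numerator]
  -- `N - r³ P(L)` is the sum of the other four terms below, multiples of `u ^ k - r ^ k`
  linarith [mul_nonneg (pow_nonneg hr 3) (cubic_nonneg hα hβ0 hβ1 hL),
    mul_nonneg (mul_nonneg (mul_nonneg hβ (by linarith : (0:ℝ) ≤ 2 - β)) (pow_nonneg hL0 3)) hu3,
    mul_nonneg (mul_nonneg (mul_nonneg (mul_nonneg hαβ (by linarith : (0:ℝ) ≤ 1 - β)) hr)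
      (sq_nonneg L)) hu2,
    mul_nonneg (mul_nonneg (mul_nonneg (mul_nonneg hαβ (by linarith : (0:ℝ) ≤ α + 1))
      (sq_nonneg r)) hL0) hu1,
    mul_nonneg (mul_nonneg (mul_nonneg hαβ (sq_nonneg r)) (sq_nonneg L)) hu1]

/-- For `α ≥ 0`, `β ∈ (0,1]`, `λ ≥ e^{(3+2α)/β}`, the function
`φ(r) = r^β / (log(λ+r))^α` has nonnegative third derivative on `(0,∞)`. -/
theorem stmt7 (α β lam : ℝ) (hα : 0 ≤ α) (hβ0 : 0 < β) (hβ1 : β ≤ 1)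
    (hlam : Real.exp ((3 + 2 * α) / β) ≤ lam) :
    ∀ r > (0 : ℝ),
      0 ≤ deriv (deriv (deriv
        (fun r : ℝ => r ^ β / (Real.log (lam + r)) ^ α))) r := by
  intro r hr
  have hexp : 1 ≤ exp ((3 + 2 * α) / β) := one_le_exp (by positivity)
  have hlog : 3 + 2 * α ≤ β * log (lam + r) := by
    rw [← div_le_iff₀' hβ0, le_log_iff_exp_le (by linarith)]
    linarith
  change 0 ≤ deriv (deriv (deriv (phi lam α β))) r
  rw [deriv_deriv_deriv_phi α β (hexp.trans hlam) hr]
  exact mul_nonneg (logMonomial_pos _ _ _ hr (by linarith)).le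
    (phiDeriv₃Numerator_nonneg hα hβ0 hβ1 hr.le (by linarith) hlog)
end
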